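/- Let f be a strictly increasing Allee map on [0,b] with threshold A_f and carrying capacity K_f, and let g be a strictly increasing Allee map on [0,b] with threshold A_g and carrying capacity K_g, where A_f < A_g < K_f < K_g. If x₀ ∈ [A_g, b], then μ({ω : ∃ n₀ ∈ ℕ, ∀ n ≥ n₀, X n ω ∈ [K_f, K_g]}) = 1. -/

import Mathlib

open MeasureTheory ProbabilityTheory Filter Set

/-- `f` is a strictly increasing Allee map on `[0, b]` with threshold `A` and
carrying capacity `K`. -/
def IsIncAlleeMap (b A K : ℝ) (f : ℝ → ℝ) : Prop :=
  0 < A ∧ A < K ∧ K < b ∧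
  MapsTo f (Icc 0 b) (Icc 0 b) ∧
  ContinuousOn f (Icc 0 b) ∧
  StrictMonoOn f (Icc 0 b) ∧
  f 0 = 0 ∧ f A = A ∧ f K = K ∧
  (∀ x ∈ Ioo 0 A ∪ Ioc K b, f x < x) ∧
  (∀ x ∈ Ioo A K, x < f x)

/-- The random orbit driven by a sequence of coin flips: apply `f` when the coin shows
`true` and `g` when it shows `false`. -/
def randOrbit (f g : ℝ → ℝ) (x₀ : ℝ) : ℕ → (ℕ → Bool) → ℝ
  | 0, _ => x₀
  | n + 1, ω => if ω n then f (randOrbit f g x₀ n ω) else g (randOrbit f g x₀ n ω)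

/-!
The intervals `[A_g, b]`, `[A_g, K_g]` and `[K_f, K_g]` are invariant under both maps. Above
`K_g` both maps push points down, so an orbit staying above `K_g` is monotone and converges; as
`f` is applied infinitely often its limit is a fixed point of `f` in `[K_g, b]`, and there is none.
Likewise in `[A_g, K_f)` both maps push points up, and an orbit staying there would converge to a
common fixed point of `f` and `g` in `[A_g, K_f]`, and there is none. So the orbit enters
`[K_f, K_g]` and stays there, provided both coin faces appear infinitely often, which happens
almost surely by the second Borel–Cantelli lemma.
-/

open Topology Function
open scoped ENNReal

theorem isFixedPt_of_tendsto_of_frequently {X : Type*} [TopologicalSpace X] [T2Space X]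
    {f : X → X} {s : Set X} {x : ℕ → X} {L : X} (hx : Tendsto x atTop (𝓝 L))
    (hxs : ∀ n, x n ∈ s) (hf : ContinuousWithinAt f s L)
    (hstep : ∃ᶠ n in atTop, x (n + 1) = f (x n)) : IsFixedPt f L :=
  (tendsto_nhds_unique_of_frequently_eq ((tendsto_add_atTop_iff_nat 1).2 hx)
    (hf.tendsto.comp (tendsto_nhdsWithin_iff.2 ⟨hx, .of_forall hxs⟩)) hstep).symm

section MonotoneConvergence

variable {α : Type*} [ConditionallyCompleteLinearOrder α] [TopologicalSpace α] [OrderTopology α]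
  {x : ℕ → α} {a c : α}

theorem Monotone.exists_tendsto_mem_Icc (hx : Monotone x) (hxs : ∀ n, x n ∈ Icc a c) :
    ∃ L ∈ Icc a c, Tendsto x atTop (𝓝 L) :=
  have h := tendsto_atTop_ciSup hx ⟨c, forall_mem_range.2 fun n => (hxs n).2⟩
  ⟨_, isClosed_Icc.mem_of_tendsto h (.of_forall hxs), h⟩

theorem Antitone.exists_tendsto_mem_Icc (hx : Antitone x) (hxs : ∀ n, x n ∈ Icc a c) :
    ∃ L ∈ Icc a c, Tendsto x atTop (𝓝 L) :=
  have h := tendsto_atTop_ciInf hx ⟨a, forall_mem_range.2 fun n => (hxs n).1⟩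
  ⟨_, isClosed_Icc.mem_of_tendsto h (.of_forall hxs), h⟩

end MonotoneConvergence

theorem Filter.Frequently.nat_add {p : ℕ → Prop} (h : ∃ᶠ n in atTop, p n) (k : ℕ) :
    ∃ᶠ n in atTop, p (n + k) := by
  rwa [← map_add_atTop_eq_nat k, frequently_map] at h

namespace IsIncAlleeMap

variable {b A K : ℝ} {f : ℝ → ℝ}

theorem threshold_pos (hf : IsIncAlleeMap b A K f) : 0 < A := hf.1

theorem threshold_lt_capacity (hf : IsIncAlleeMap b A K f) : A < K := hf.2.1

theorem capacity_lt (hf : IsIncAlleeMap b A K f) : K < b := hf.2.2.1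

theorem continuousOn (hf : IsIncAlleeMap b A K f) : ContinuousOn f (Icc 0 b) := hf.2.2.2.2.1

theorem self_le_of_mem_Icc (hf : IsIncAlleeMap b A K f) {x : ℝ} (hx : x ∈ Icc A K) :
    x ≤ f x := by
  obtain ⟨-, -, -, -, -, -, -, hfA, hfK, -, hgt⟩ := hf
  rcases hx.1.eq_or_lt with rfl | hAx
  · exact hfA.ge
  rcases hx.2.eq_or_lt with rfl | hxK
  · exact hfK.ge
  exact (hgt x ⟨hAx, hxK⟩).le

theorem le_self_of_mem_Icc (hf : IsIncAlleeMap b A K f) {x : ℝ} (hx : x ∈ Icc K b) :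
    f x ≤ x := by
  obtain ⟨-, -, -, -, -, -, -, -, hfK, hlt, -⟩ := hf
  rcases hx.1.eq_or_lt with rfl | hKx
  · exact hfK.le
  exact (hlt x (.inr ⟨hKx, hx.2⟩)).le

theorem eq_or_eq_of_isFixedPt (hf : IsIncAlleeMap b A K f) {x : ℝ} (hx : x ∈ Icc A K)
    (hfx : IsFixedPt f x) : x = A ∨ x = K := by
  obtain ⟨-, -, -, -, -, -, -, -, -, -, hgt⟩ := hf
  by_contra! h
  exact (hgt x ⟨hx.1.lt_of_ne' h.1, hx.2.lt_of_ne h.2⟩).ne' hfx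

theorem eq_of_isFixedPt (hf : IsIncAlleeMap b A K f) {x : ℝ} (hx : x ∈ Icc K b)
    (hfx : IsFixedPt f x) : x = K := by
  obtain ⟨-, -, -, -, -, -, -, -, -, hlt, -⟩ := hf
  by_contra h
  exact (hlt x (.inr ⟨hx.1.lt_of_ne' h, hx.2⟩)).ne hfx

theorem mapsTo_Icc (hf : IsIncAlleeMap b A K f) {u v : ℝ} (hu : u ∈ Icc A K)
    (hv : v ∈ Icc K b) : MapsTo f (Icc u v) (Icc u v) := by
  have hmono : MonotoneOn f (Icc u v) :=
    hf.2.2.2.2.2.1.monotoneOn.mono (Icc_subset_Icc (hf.threshold_pos.le.trans hu.1) hv.2)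
  intro x hx
  exact ⟨(hf.self_le_of_mem_Icc hu).trans (hmono (left_mem_Icc.2 (hx.1.trans hx.2)) hx hx.1),
    (hmono hx (right_mem_Icc.2 (hx.1.trans hx.2)) hx.2).trans (hf.le_self_of_mem_Icc hv)⟩

end IsIncAlleeMap

section randOrbit

variable {f g : ℝ → ℝ} {x₀ : ℝ} {ω : ℕ → Bool} {s : Set ℝ}

theorem randOrbit_add (m n : ℕ) :
    randOrbit f g x₀ (n + m) ω =
      randOrbit f g (randOrbit f g x₀ m ω) n (fun k => ω (k + m)) := by
  induction n with
  | zero => simp [randOrbit]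
  | succ n ih => rw [Nat.add_right_comm]; simp only [randOrbit, ih]

theorem randOrbit_mem (hf : MapsTo f s s) (hg : MapsTo g s s) (hx₀ : x₀ ∈ s) (n : ℕ) :
    randOrbit f g x₀ n ω ∈ s := by
  induction n with
  | zero => exact hx₀
  | succ n ih =>
    simp only [randOrbit]
    split
    exacts [hf ih, hg ih]

theorem randOrbit_mem_of_le (hf : MapsTo f s s) (hg : MapsTo g s s) {m n : ℕ}
    (hm : randOrbit f g x₀ m ω ∈ s) (hmn : m ≤ n) : randOrbit f g x₀ n ω ∈ s := by
  obtain ⟨k, rfl⟩ := Nat.exists_eq_add_of_le' hmn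
  rw [randOrbit_add]
  exact randOrbit_mem hf hg hm k

theorem monotone_randOrbit (hf : ∀ x ∈ s, x ≤ f x) (hg : ∀ x ∈ s, x ≤ g x)
    (hs : ∀ n, randOrbit f g x₀ n ω ∈ s) : Monotone (randOrbit f g x₀ · ω) :=
  monotone_nat_of_le_succ fun n => by
    simp only [randOrbit]
    split
    exacts [hf _ (hs n), hg _ (hs n)]

theorem antitone_randOrbit (hf : ∀ x ∈ s, f x ≤ x) (hg : ∀ x ∈ s, g x ≤ x)
    (hs : ∀ n, randOrbit f g x₀ n ω ∈ s) : Antitone (randOrbit f g x₀ · ω) :=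
  antitone_nat_of_succ_le fun n => by
    simp only [randOrbit]
    split
    exacts [hf _ (hs n), hg _ (hs n)]

theorem isFixedPt_left_of_tendsto_randOrbit {L : ℝ}
    (hlim : Tendsto (randOrbit f g x₀ · ω) atTop (𝓝 L))
    (hs : ∀ n, randOrbit f g x₀ n ω ∈ s) (hf : ContinuousWithinAt f s L)
    (hω : ∃ᶠ n in atTop, ω n = true) : IsFixedPt f L :=
  isFixedPt_of_tendsto_of_frequently hlim hs hf <| hω.mono fun n hn => by simp [randOrbit, hn]

theorem isFixedPt_right_of_tendsto_randOrbit {L : ℝ}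
    (hlim : Tendsto (randOrbit f g x₀ · ω) atTop (𝓝 L))
    (hs : ∀ n, randOrbit f g x₀ n ω ∈ s) (hg : ContinuousWithinAt g s L)
    (hω : ∃ᶠ n in atTop, ω n = false) : IsFixedPt g L :=
  isFixedPt_of_tendsto_of_frequently hlim hs hg <| hω.mono fun n hn => by simp [randOrbit, hn]

end randOrbit

section Absorption

variable {b Af Kf Ag Kg : ℝ} {f g : ℝ → ℝ} {x₀ : ℝ} {ω : ℕ → Bool}

theorem exists_randOrbit_mem_Icc_threshold_capacity (hf : IsIncAlleeMap b Af Kf f)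
    (hg : IsIncAlleeMap b Ag Kg g) (hAg : Ag ∈ Icc Af Kf) (hKfKg : Kf < Kg)
    (hx₀ : x₀ ∈ Icc Ag b) (hω : ∃ᶠ n in atTop, ω n = true) :
    ∃ n, randOrbit f g x₀ n ω ∈ Icc Ag Kg := by
  by_contra! h
  have hIcc (n : ℕ) : randOrbit f g x₀ n ω ∈ Icc Kg b := by
    have := randOrbit_mem (ω := ω) (hf.mapsTo_Icc hAg ⟨hf.capacity_lt.le, le_rfl⟩)
      (hg.mapsTo_Icc ⟨le_rfl, hg.threshold_lt_capacity.le⟩ ⟨hg.capacity_lt.le, le_rfl⟩) hx₀ n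
    exact ⟨le_of_not_ge fun hle => h n ⟨this.1, hle⟩, this.2⟩
  have hKf_le (x : ℝ) (hx : x ∈ Icc Kg b) : x ∈ Icc Kf b := ⟨hKfKg.le.trans hx.1, hx.2⟩
  obtain ⟨L, hL, hlim⟩ := (antitone_randOrbit (fun x hx => hf.le_self_of_mem_Icc (hKf_le x hx))
    (fun x hx => hg.le_self_of_mem_Icc hx) hIcc).exists_tendsto_mem_Icc hIcc
  have hcont : ContinuousOn f (Icc Kg b) :=
    hf.continuousOn.mono (Icc_subset_Icc_left (hg.threshold_pos.trans hg.threshold_lt_capacity).le)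
  have hfix := isFixedPt_left_of_tendsto_randOrbit hlim hIcc (hcont L hL) hω
  linarith [hf.eq_of_isFixedPt (hKf_le L hL) hfix, hL.1]

theorem exists_randOrbit_mem_Icc_capacities (hf : IsIncAlleeMap b Af Kf f)
    (hg : IsIncAlleeMap b Ag Kg g) (hAfAg : Af < Ag) (hAgKf : Ag < Kf) (hKfKg : Kf < Kg)
    (hx₀ : x₀ ∈ Icc Ag Kg) (htrue : ∃ᶠ n in atTop, ω n = true)
    (hfalse : ∃ᶠ n in atTop, ω n = false) : ∃ n, randOrbit f g x₀ n ω ∈ Icc Kf Kg := by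
  by_contra! h
  have hIcc (n : ℕ) : randOrbit f g x₀ n ω ∈ Icc Ag Kf := by
    have := randOrbit_mem (ω := ω)
      (hf.mapsTo_Icc ⟨hAfAg.le, hAgKf.le⟩ ⟨hKfKg.le, hg.capacity_lt.le⟩)
      (hg.mapsTo_Icc ⟨le_rfl, hg.threshold_lt_capacity.le⟩ ⟨le_rfl, hg.capacity_lt.le⟩) hx₀ n
    exact ⟨this.1, le_of_not_ge fun hle => h n ⟨hle, this.2⟩⟩
  obtain ⟨L, hL, hlim⟩ := (monotone_randOrbit
    (fun x hx => hf.self_le_of_mem_Icc ⟨hAfAg.le.trans hx.1, hx.2⟩)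
    (fun x hx => hg.self_le_of_mem_Icc ⟨hx.1, hx.2.trans hKfKg.le⟩)
    hIcc).exists_tendsto_mem_Icc hIcc
  have hsub : Icc Ag Kf ⊆ Icc 0 b := Icc_subset_Icc hg.threshold_pos.le hf.capacity_lt.le
  have hfL := isFixedPt_left_of_tendsto_randOrbit hlim hIcc (hf.continuousOn.mono hsub L hL) htrue
  have hgL := isFixedPt_right_of_tendsto_randOrbit hlim hIcc (hg.continuousOn.mono hsub L hL) hfalse
  rcases hf.eq_or_eq_of_isFixedPt ⟨hAfAg.le.trans hL.1, hL.2⟩ hfL with hL' | hL' <;>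
    rcases hg.eq_or_eq_of_isFixedPt ⟨hL.1, hL.2.trans hKfKg.le⟩ hgL with hL'' | hL'' <;>
    linarith [hL.1]

theorem eventually_randOrbit_mem_Icc (hf : IsIncAlleeMap b Af Kf f)
    (hg : IsIncAlleeMap b Ag Kg g) (horder : Af < Ag ∧ Ag < Kf ∧ Kf < Kg)
    (hx₀ : x₀ ∈ Icc Ag b) (htrue : ∃ᶠ n in atTop, ω n = true)
    (hfalse : ∃ᶠ n in atTop, ω n = false) :
    ∀ᶠ n in atTop, randOrbit f g x₀ n ω ∈ Icc Kf Kg := by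
  obtain ⟨hAfAg, hAgKf, hKfKg⟩ := horder
  obtain ⟨m, hm⟩ :=
    exists_randOrbit_mem_Icc_threshold_capacity hf hg ⟨hAfAg.le, hAgKf.le⟩ hKfKg hx₀ htrue
  obtain ⟨k, hk⟩ := exists_randOrbit_mem_Icc_capacities hf hg hAfAg hAgKf hKfKg hm
    (htrue.nat_add m) (hfalse.nat_add m)
  rw [← randOrbit_add] at hk
  exact eventually_atTop.2 ⟨k + m, fun n hn => randOrbit_mem_of_le
    (hf.mapsTo_Icc ⟨hf.threshold_lt_capacity.le, le_rfl⟩ ⟨hKfKg.le, hg.capacity_lt.le⟩)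
    (hg.mapsTo_Icc ⟨hAgKf.le, hKfKg.le⟩ ⟨le_rfl, hg.capacity_lt.le⟩) hk hn⟩

end Absorption

theorem ProbabilityTheory.iIndepFun.ae_frequently_mem {Ω β : Type*} [MeasurableSpace Ω]
    [MeasurableSpace β] {μ : Measure Ω} {X : ℕ → Ω → β} (hindep : iIndepFun X μ)
    (hX : ∀ n, Measurable (X n)) {B : Set β} (hB : MeasurableSet B)
    (hsum : ∑' n, μ (X n ⁻¹' B) = ∞) :
    ∀ᵐ ω ∂μ, ∃ᶠ n in atTop, X n ω ∈ B := by
  have := hindep.isProbabilityMeasure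
  have hsm (n : ℕ) : MeasurableSet (X n ⁻¹' B) := hX n hB
  have hind : iIndepSet (fun n => X n ⁻¹' B) μ :=
    (iIndepSet_iff_meas_biInter hsm).2 fun _ => hindep.meas_biInter fun _ _ => ⟨B, hB, rfl⟩
  have hlimsup := MeasurableSet.measurableSet_limsup hsm
  filter_upwards [(ae_mem_iff_measure_eq hlimsup.nullMeasurableSet).2
    (by rw [measure_limsup_eq_one hsm hind hsum, measure_univ])] with ω hω
  exact mem_limsup_iff_frequently_mem.1 hω

theorem ae_frequently_coord_eq {μ : Measure (ℕ → Bool)}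
    (hindep : iIndepFun (fun n ω => ω n) μ) {v : Bool} {c : ℝ≥0∞} (hc : c ≠ 0)
    (hv : ∀ n, μ {ω | ω n = v} = c) :
    ∀ᵐ ω ∂μ, ∃ᶠ n in atTop, ω n = v :=
  hindep.ae_frequently_mem measurable_pi_apply (measurableSet_singleton v) <| by
    change ∑' n, μ {ω | ω n = v} = ∞
    simpa [hv] using ENNReal.tsum_const_eq_top_of_ne_zero (α := ℕ) hc

theorem stmt3_general
    (b Af Kf Ag Kg : ℝ)
    (f g : ℝ → ℝ)
    (hf : IsIncAlleeMap b Af Kf f) (hg : IsIncAlleeMap b Ag Kg g)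
    (horder : Af < Ag ∧ Ag < Kf ∧ Kf < Kg)
    (p : ℝ) (hp : p ∈ Ioo (0 : ℝ) 1)
    (μ : Measure (ℕ → Bool)) [IsProbabilityMeasure μ]
    (hindep : iIndepFun (fun n ω => ω n) μ)
    (hcoin : ∀ n, μ {ω | ω n = true} = ENNReal.ofReal p)
    (x₀ : ℝ) (hx₀ : x₀ ∈ Icc Ag b) :
    μ {ω | ∃ n₀ : ℕ, ∀ n ≥ n₀, randOrbit f g x₀ n ω ∈ Icc Kf Kg} = 1 := by
  have htrue : ∀ᵐ ω ∂μ, ∃ᶠ n in atTop, ω n = true :=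
    ae_frequently_coord_eq hindep (ENNReal.ofReal_pos.2 hp.1).ne' hcoin
  have hcoin_false (n : ℕ) : μ {ω | ω n = false} = 1 - ENNReal.ofReal p := by
    rw [← hcoin n, ← prob_compl_eq_one_sub (measurableSet_eq_fun (measurable_pi_apply n)
      measurable_const)]
    congr 1
    ext ω
    simp
  have hfalse : ∀ᵐ ω ∂μ, ∃ᶠ n in atTop, ω n = false :=
    ae_frequently_coord_eq hindep (tsub_pos_of_lt (ENNReal.ofReal_lt_one.2 hp.2)).ne' hcoin_false
  have hae : ∀ᵐ ω ∂μ, ∃ n₀ : ℕ, ∀ n ≥ n₀, randOrbit f g x₀ n ω ∈ Icc Kf Kg := by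
    filter_upwards [htrue, hfalse] with ω hωt hωf
    exact eventually_atTop.1 (eventually_randOrbit_mem_Icc hf hg horder hx₀ hωt hωf)
  exact (measure_congr (ae_eq_univ.2 (ae_iff.1 hae))).trans measure_univ

theorem stmt3
    (b Af Kf Ag Kg : ℝ) (hb : 0 < b)
    (f g : ℝ → ℝ)
    (hf : IsIncAlleeMap b Af Kf f) (hg : IsIncAlleeMap b Ag Kg g)
    (horder : Af < Ag ∧ Ag < Kf ∧ Kf < Kg)
    (p : ℝ) (hp : p ∈ Ioo (0 : ℝ) 1)
    (μ : Measure (ℕ → Bool)) [IsProbabilityMeasure μ]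
    (hindep : iIndepFun (fun n ω => ω n) μ)
    (hcoin : ∀ n, μ {ω | ω n = true} = ENNReal.ofReal p)
    (x₀ : ℝ) (hx₀ : x₀ ∈ Icc Ag b) :
    μ {ω | ∃ n₀ : ℕ, ∀ n ≥ n₀, randOrbit f g x₀ n ω ∈ Icc Kf Kg} = 1 :=
  stmt3_general b Af Kf Ag Kg f g hf hg horder p hp μ hindep hcoin x₀ hx₀
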